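/- arXiv:math/0703833 — 2 statements merged into one kernel-verified Lean document; each statement's English description precedes it below -/
import Mathlib

section
/- Let h : (c,d) → ℝ be twice differentiable at x, let ψ, φ be positive solutions of (A−α)v = 0 with φ decreasing, F = ψ/φ strictly increasing and differentiable, and set H(y) = (h/φ)(F^{-1}(y)). Then H'(F(x)) = (1/F'(x))·(h/φ)'(x), and H''(F(x)) has the same sign as (A−α)h(x), i.e., H''(F(x))·[(A−α)h(x)] ≥ 0, with strict inequality whenever H''(F(x)) ≠ 0. -/
/-!
Write `h/φ = H ∘ F`, so that `h = (H ∘ F) φ` and `ψ = F φ`. By the product rule,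
`(A - α)(g φ) = g (A - α)φ + g' (σ² φ' + μ φ) + (σ²/2) g'' φ` for every `g`. Taking `g = F`,
`(A - α)ψ = (A - α)φ = 0` gives `F' (σ² φ' + μ φ) = -(σ²/2) F'' φ`. Taking `g = H ∘ F` and
using `(H ∘ F)'' = H''(F) F'² + H'(F) F''`, the `F''` terms cancel and
`(A - α)h = (σ²/2) φ F'² H''(F)`, whose coefficient is positive.
-/

open Filter Topology

section SecondDerivative

variable {f g : ℝ → ℝ} {x : ℝ}

lemma ContDiffAt.differentiableAt_deriv (hf : ContDiffAt ℝ 2 f x) :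
    DifferentiableAt ℝ (deriv f) x :=
  (hf.derivWithin (m := 1) (by norm_num)).differentiableAt one_ne_zero

lemma ContDiffAt.eventually_differentiableAt (hf : ContDiffAt ℝ 2 f x) :
    ∀ᶠ y in 𝓝 x, DifferentiableAt ℝ f y :=
  (hf.eventually (by simp)).mono fun _ hy => hy.differentiableAt two_ne_zero

lemma deriv_deriv_mul (hf : ContDiffAt ℝ 2 f x) (hg : ContDiffAt ℝ 2 g x) :
    deriv (deriv fun t => f t * g t) x =
      deriv (deriv f) x * g x + 2 * deriv f x * deriv g x + f x * deriv (deriv g) x := by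
  have hderiv : deriv (fun t => f t * g t) =ᶠ[𝓝 x]
      fun t => deriv f t * g t + f t * deriv g t := by
    filter_upwards [hf.eventually_differentiableAt, hg.eventually_differentiableAt]
      with t hft hgt
    exact deriv_mul hft hgt
  have hf₁ := (hf.differentiableAt two_ne_zero).hasDerivAt
  have hg₁ := (hg.differentiableAt two_ne_zero).hasDerivAt
  have hf₂ := hf.differentiableAt_deriv.hasDerivAt
  have hg₂ := hg.differentiableAt_deriv.hasDerivAt
  have hderiv' : HasDerivAt (fun t => deriv f t * g t + f t * deriv g t)
      (deriv (deriv f) x * g x + deriv f x * deriv g x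
        + (deriv f x * deriv g x + f x * deriv (deriv g) x)) x :=
    (hf₂.mul hg₁).add (hf₁.mul hg₂)
  rw [hderiv.deriv_eq, hderiv'.deriv]
  ring

lemma deriv_deriv_comp (hg : ContDiffAt ℝ 2 g (f x)) (hf : ContDiffAt ℝ 2 f x) :
    deriv (deriv (g ∘ f)) x =
      deriv (deriv g) (f x) * deriv f x ^ 2 + deriv g (f x) * deriv (deriv f) x := by
  have hderiv : deriv (g ∘ f) =ᶠ[𝓝 x] fun t => deriv g (f t) * deriv f t := by
    filter_upwards [hf.continuousAt.tendsto.eventually hg.eventually_differentiableAt,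
      hf.eventually_differentiableAt] with t hgt hft
    exact deriv_comp t hgt hft
  have hderiv' : HasDerivAt (fun t => deriv g (f t) * deriv f t)
      (deriv (deriv g) (f x) * deriv f x * deriv f x + deriv g (f x) * deriv (deriv f) x) x :=
    (hg.differentiableAt_deriv.hasDerivAt.comp x
      (hf.differentiableAt two_ne_zero).hasDerivAt).mul hf.differentiableAt_deriv.hasDerivAt
  rw [hderiv.deriv_eq, hderiv'.deriv]
  ring

end SecondDerivative

section KilledGenerator

variable (σ μ : ℝ → ℝ) (α : ℝ)

/-- `killedGenerator σ μ α v t` is `(A - α) v (t)` for `A v = (σ²/2) v'' + μ v'`. -/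
noncomputable def killedGenerator (v : ℝ → ℝ) (t : ℝ) : ℝ :=
  σ t ^ 2 / 2 * deriv (deriv v) t + μ t * deriv v t - α * v t

variable {σ μ α}

lemma killedGenerator_mul {g φ : ℝ → ℝ} {t : ℝ} (hg : ContDiffAt ℝ 2 g t)
    (hφ : ContDiffAt ℝ 2 φ t) :
    killedGenerator σ μ α (fun s => g s * φ s) t =
      g t * killedGenerator σ μ α φ t + deriv g t * (σ t ^ 2 * deriv φ t + μ t * φ t)
        + σ t ^ 2 / 2 * deriv (deriv g) t * φ t := by
  simp only [killedGenerator]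
  rw [deriv_deriv_mul hg hφ, deriv_fun_mul (hg.differentiableAt two_ne_zero)
    (hφ.differentiableAt two_ne_zero)]
  ring

lemma killedGenerator_comp_mul_eq {H F φ : ℝ → ℝ} {x : ℝ} (hH : ContDiffAt ℝ 2 H (F x))
    (hF : ContDiffAt ℝ 2 F x) (hφ : ContDiffAt ℝ 2 φ x)
    (hφsol : killedGenerator σ μ α φ x = 0)
    (hFφsol : killedGenerator σ μ α (fun t => F t * φ t) x = 0) :
    killedGenerator σ μ α (fun t => (H ∘ F) t * φ t) x =
      σ x ^ 2 / 2 * φ x * deriv F x ^ 2 * deriv (deriv H) (F x) := by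
  rw [killedGenerator_mul hF hφ] at hFφsol
  rw [killedGenerator_mul (hH.comp x hF) hφ, deriv_deriv_comp hH hF,
    deriv_comp x (hH.differentiableAt two_ne_zero) (hF.differentiableAt two_ne_zero),
    Function.comp_apply]
  linear_combination (H (F x) - deriv H (F x) * F x) * hφsol + deriv H (F x) * hFφsol

end KilledGenerator

theorem stmt6_general (α x : ℝ) (μ σ h ψ φ F H : ℝ → ℝ)
    (hσ : ∀ t, 0 < σ t)
    (hφpos : ∀ t, 0 < φ t)
    (hψode : ∀ t, σ t ^ 2 / 2 * deriv (deriv ψ) t + μ t * deriv ψ t - α * ψ t = 0)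
    (hφode : ∀ t, σ t ^ 2 / 2 * deriv (deriv φ) t + μ t * deriv φ t - α * φ t = 0)
    (hF : F = fun t => ψ t / φ t)
    (hF' : ∀ t, 0 < deriv F t)
    (hH : ∀ t, H (F t) = h t / φ t)
    (hψ2 : ContDiff ℝ 2 ψ) (hφ2 : ContDiff ℝ 2 φ)
    (hH2 : ContDiffAt ℝ 2 H (F x)) :
    deriv H (F x) = (1 / deriv F x) * deriv (fun t => h t / φ t) x ∧
    deriv (deriv H) (F x)
        * (σ x ^ 2 / 2 * deriv (deriv h) x + μ x * deriv h x - α * h x) ≥ 0 ∧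
    (deriv (deriv H) (F x) ≠ 0 →
      deriv (deriv H) (F x)
        * (σ x ^ 2 / 2 * deriv (deriv h) x + μ x * deriv h x - α * h x) > 0) := by
  have hφne : ∀ t, φ t ≠ 0 := fun t => (hφpos t).ne'
  have hF2 : ContDiffAt ℝ 2 F x := hF ▸ (hψ2.div hφ2 hφne).contDiffAt
  have hquot : (fun t => h t / φ t) = H ∘ F := funext fun t => (hH t).symm
  have hψ : ψ = fun t => F t * φ t := by
    funext t; rw [hF, div_mul_cancel₀ _ (hφne t)]
  have hh : h = fun t => (H ∘ F) t * φ t := by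
    funext t; rw [← hquot, div_mul_cancel₀ _ (hφne t)]
  have hgen : σ x ^ 2 / 2 * deriv (deriv h) x + μ x * deriv h x - α * h x =
      σ x ^ 2 / 2 * φ x * deriv F x ^ 2 * deriv (deriv H) (F x) := by
    rw [hh]
    exact killedGenerator_comp_mul_eq hH2 hF2 hφ2.contDiffAt (hφode x) (hψ ▸ hψode x)
  have hcoef : 0 < σ x ^ 2 / 2 * φ x * deriv F x ^ 2 := by
    have := hσ x; have := hφpos x; have := hF' x; positivity
  refine ⟨?_, ?_, fun hne => ?_⟩
  · rw [hquot, deriv_comp x (hH2.differentiableAt two_ne_zero) (hF2.differentiableAt two_ne_zero)]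
    field_simp [(hF' x).ne']
  · rw [hgen]; nlinarith [mul_self_nonneg (deriv (deriv H) (F x))]
  · rw [hgen]; nlinarith [mul_self_pos.mpr hne]

/-- With `ψ, φ` the increasing/decreasing solutions of `(A-α)v = 0`, `F = ψ/φ` strictly
increasing with `F' > 0`, and `H(y) = (h/φ)(F⁻¹(y))`: then
`H'(F(x)) = (1/F'(x))·(h/φ)'(x)`, and `H''(F(x))` has the same sign as `(A-α)h(x)`:
`H''(F(x))·[(A-α)h(x)] ≥ 0`, with strict inequality whenever `H''(F(x)) ≠ 0`. -/
theorem stmt6 (α x : ℝ) (μ σ h ψ φ F H : ℝ → ℝ)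
    (hσ : ∀ t, 0 < σ t) (hα : 0 < α)
    (hψpos : ∀ t, 0 < ψ t) (hφpos : ∀ t, 0 < φ t)
    (hψmono : StrictMono ψ) (hφanti : StrictAnti φ)
    (hψode : ∀ t, σ t ^ 2 / 2 * deriv (deriv ψ) t + μ t * deriv ψ t - α * ψ t = 0)
    (hφode : ∀ t, σ t ^ 2 / 2 * deriv (deriv φ) t + μ t * deriv φ t - α * φ t = 0)
    (hF : F = fun t => ψ t / φ t) (hFmono : StrictMono F)
    (hF' : ∀ t, 0 < deriv F t)
    (hH : ∀ t, H (F t) = h t / φ t)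
    (hh2 : ContDiff ℝ 2 h) (hψ2 : ContDiff ℝ 2 ψ) (hφ2 : ContDiff ℝ 2 φ)
    (hH2 : ContDiffAt ℝ 2 H (F x)) :
    deriv H (F x) = (1 / deriv F x) * deriv (fun t => h t / φ t) x ∧
    deriv (deriv H) (F x)
        * (σ x ^ 2 / 2 * deriv (deriv h) x + μ x * deriv h x - α * h x) ≥ 0 ∧
    (deriv (deriv H) (F x) ≠ 0 →
      deriv (deriv H) (F x)
        * (σ x ^ 2 / 2 * deriv (deriv h) x + μ x * deriv h x - α * h x) > 0) :=
  stmt6_general α x μ σ h ψ φ F H hσ hφpos hψode hφode hF hF' hH hψ2 hφ2 hH2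
end

section
/- Let W : [0,∞) → ℝ be the smallest nonnegative concave majorant of a function R : [0,∞) → ℝ with W(0) = R(0⁺)⁺ ≥ 0. If W(y) = ρy + l on an interval [0, y₀] and W = R on [y₀, ∞) with R differentiable at y₀, then W is differentiable at y₀ and ρ = R'(y₀) (smooth fit): the left derivative ρ of W equals the right derivative R'(y₀). -/
/-- Smooth fit: if `W` is the smallest nonnegative concave majorant of `R` on `[0,∞)` with
`W(0) = l ≥ 0`, `W(y) = ρy + l` on `[0,y₀]`, `W = R` on `[y₀,∞)`, and `R` is
differentiable at `y₀` with derivative `r'`, then `ρ = r'` and `W` is differentiable at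
`y₀` with derivative `ρ`. -/
theorem stmt10 (R W : ℝ → ℝ) (l ρ y₀ r' : ℝ) (hy₀ : 0 < y₀) (hl : 0 ≤ l)
    (hWconc : ConcaveOn ℝ (Set.Ici 0) W)
    (hWnonneg : ∀ y ∈ Set.Ici (0:ℝ), 0 ≤ W y)
    (hWmaj : ∀ y ∈ Set.Ici (0:ℝ), R y ≤ W y)
    (hW0 : W 0 = l)
    (hmin : ∀ V : ℝ → ℝ, ConcaveOn ℝ (Set.Ici 0) V → (∀ y ∈ Set.Ici (0:ℝ), 0 ≤ V y) →
      (∀ y ∈ Set.Ici (0:ℝ), R y ≤ V y) → V 0 = l → ∀ y ∈ Set.Ici (0:ℝ), W y ≤ V y)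
    (haff : ∀ y ∈ Set.Icc (0:ℝ) y₀, W y = ρ * y + l)
    (heq : ∀ y ∈ Set.Ici y₀, W y = R y)
    (hR' : HasDerivAt R r' y₀) :
    ρ = r' ∧ HasDerivAt W ρ y₀ := by
  have hWy₀ : W y₀ = ρ * y₀ + l := haff y₀ ⟨hy₀.le, le_refl _⟩
  have hRy₀ : R y₀ = ρ * y₀ + l := by rw [← heq y₀ (Set.mem_Ici.mpr le_rfl), hWy₀]
  have hslope := hasDerivAt_iff_tendsto_slope.mp hR'
  -- ρ ≤ r' : use slopes from the left
  have h1 : ρ ≤ r' := by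
    have htend : Filter.Tendsto (slope R y₀) (nhdsWithin y₀ (Set.Iio y₀)) (nhds r') :=
      hslope.mono_left (nhdsWithin_mono _ fun y hy =>
        Set.mem_compl_singleton_iff.mpr (ne_of_lt hy))
    refine ge_of_tendsto htend ?_
    filter_upwards [self_mem_nhdsWithin,
      mem_nhdsWithin_of_mem_nhds (Ioi_mem_nhds hy₀)] with y hyy₀' hy0'
    have hyy₀ : y < y₀ := hyy₀'
    have hy0 : (0:ℝ) < y := hy0'
    have hRle : R y ≤ ρ * y + l := by
      have := hWmaj y (Set.mem_Ici.mpr hy0.le)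
      rwa [haff y ⟨hy0.le, le_of_lt hyy₀⟩] at this
    rw [slope_def_field, le_div_iff_of_neg (by linarith : y - y₀ < 0)]
    rw [hRy₀]; nlinarith
    -- need Ioo 0 y₀ ∈ 𝓝[<] y₀
  have h2 : r' ≤ ρ := by
    have htend : Filter.Tendsto (slope R y₀) (nhdsWithin y₀ (Set.Ioi y₀)) (nhds r') :=
      hslope.mono_left (nhdsWithin_mono _ fun y hy =>
        Set.mem_compl_singleton_iff.mpr (ne_of_gt hy))
    refine le_of_tendsto htend ?_
    filter_upwards [self_mem_nhdsWithin] with y (hy : y₀ < y)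
    have hconc := hWconc.slope_anti_adjacent (x := y₀/2) (y := y₀) (z := y)
      (Set.mem_Ici.mpr (by positivity)) (Set.mem_Ici.mpr (le_trans hy₀.le hy.le)) (by linarith) hy
    have hWl : W (y₀/2) = ρ * (y₀/2) + l := haff _ ⟨by positivity, by linarith⟩
    have hWy : W y = R y := heq y hy.le
    rw [slope_def_field, hRy₀, ← hWy]
    have hright : (W y₀ - W (y₀/2)) / (y₀ - y₀/2) = ρ := by
      rw [hWy₀, hWl, div_eq_iff (ne_of_gt (by linarith : (0:ℝ) < y₀ - y₀/2))]; ring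
    rw [hright] at hconc
    calc (W y - (ρ * y₀ + l)) / (y - y₀) = (W y - W y₀) / (y - y₀) := by rw [hWy₀]
    _ ≤ ρ := hconc
  have hρ : ρ = r' := le_antisymm h1 h2
  refine ⟨hρ, ?_⟩
  -- differentiability: split into left and right
  have hleft : HasDerivWithinAt W ρ (Set.Iic y₀) y₀ := by
    have haffW : HasDerivWithinAt (fun y => ρ * y + l) ρ (Set.Iic y₀) y₀ := by
      simpa using (((hasDerivAt_id y₀).const_mul ρ).add_const l).hasDerivWithinAt
    refine haffW.congr_of_eventuallyEq_of_mem ?_ (Set.mem_Iic.mpr le_rfl)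
    filter_upwards [self_mem_nhdsWithin,
      mem_nhdsWithin_of_mem_nhds (Ici_mem_nhds hy₀)] with y hy1 hy2
    exact haff y ⟨hy2, hy1⟩
  have hright : HasDerivWithinAt W ρ (Set.Ici y₀) y₀ := by
    have hRW : HasDerivWithinAt R ρ (Set.Ici y₀) y₀ := hρ ▸ hR'.hasDerivWithinAt
    refine hRW.congr (fun y hy => heq y hy) (heq y₀ (Set.mem_Ici.mpr le_rfl))
  have := hleft.union hright
  rw [Set.Iic_union_Ici] at this
  exact this.hasDerivAt Filter.univ_mem
end
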